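/- For every integer q ≥ 2 and all integers t_1 ≥ … ≥ t_q ≥ 3, the packing parameter satisfies t_1·t_2 ≤ P_q(t_1,…,t_q). -/

import Mathlib

open SimpleGraph

namespace RamseyGadgets

variable {q : ℕ}

/-- The graph consisting of the edges of `G` receiving color `i` under `φ`. -/
def colorSub (G : SimpleGraph ℕ) (φ : Sym2 ℕ → Fin q) (i : Fin q) : SimpleGraph ℕ :=
  SimpleGraph.fromEdgeSet {e | e ∈ G.edgeSet ∧ φ e = i}

/-- `φ` is a `(K_{t 0}, …, K_{t (q-1)})`-free coloring of `G`: for every color `i`, the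
edges of color `i` span no clique on `t i` vertices. -/
def FreeColoring (t : Fin q → ℕ) (G : SimpleGraph ℕ) (φ : Sym2 ℕ → Fin q) : Prop :=
  ∀ i : Fin q, (colorSub G φ i).CliqueFree (t i)

/-- `G` is `q`-Ramsey for the tuple of cliques `(K_{t 0}, …, K_{t (q-1)})`. -/
def IsRamsey (t : Fin q → ℕ) (G : SimpleGraph ℕ) : Prop :=
  ∀ φ : Sym2 ℕ → Fin q, ¬ FreeColoring t G φ

/-- `G` is `q`-Ramsey-minimal for the tuple of cliques `(K_{t 0}, …, K_{t (q-1)})`. -/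
def RamseyMinimal (t : Fin q → ℕ) (G : SimpleGraph ℕ) : Prop :=
  IsRamsey t G ∧ ∀ G' : SimpleGraph ℕ, G' < G → ¬ IsRamsey t G'

/-- `ι` realizes an attachment of a gadget `R`, with signal edge `e`, to the edge `f` of `G`:
the copy of `R` under `ι` meets `G` exactly in the edge `f`, with which `e` is identified. -/
def IsAttachment (R : SimpleGraph ℕ) (e : Sym2 ℕ) (G : SimpleGraph ℕ) (f : Sym2 ℕ)
    (ι : ℕ ↪ ℕ) : Prop :=
  f ∈ G.edgeSet ∧ Sym2.map ι e = f ∧ ∀ v ∈ R.support, v ∉ e → ι v ∉ G.support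

/-- `ι` realizes a joining of the edges `a` and `b` of `G` by `S` (with signal edges `e`, `f`). -/
def IsJoining (S : SimpleGraph ℕ) (e f : Sym2 ℕ) (G : SimpleGraph ℕ) (a b : Sym2 ℕ)
    (ι : ℕ ↪ ℕ) : Prop :=
  a ∈ G.edgeSet ∧ b ∈ G.edgeSet ∧ Sym2.map ι e = a ∧ Sym2.map ι f = b ∧
    ∀ v ∈ S.support, v ∉ e → v ∉ f → ι v ∉ G.support

/-- `ψ` extends `φ` along the embedded copy of `R` given by `ι`. -/
def ExtendsOn (R : SimpleGraph ℕ) (ι : ℕ ↪ ℕ) (φ ψ : Sym2 ℕ → Fin q) : Prop :=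
  ∀ e' ∈ R.edgeSet, ψ (Sym2.map ι e') = φ e'

/-- An `X`-determiner for the tuple `(K_{t 0}, …, K_{t (q-1)})` with signal edge `e`. -/
structure IsDeterminer (t : Fin q → ℕ) (X : Set (Fin q)) (R : SimpleGraph ℕ) (e : Sym2 ℕ) :
    Prop where
  finite : R.edgeSet.Finite
  edge_mem : e ∈ R.edgeSet
  not_ramsey : ¬ IsRamsey t R
  color_mem : ∀ φ : Sym2 ℕ → Fin q, FreeColoring t R φ → φ e ∈ X
  exists_color : ∀ c ∈ X, ∃ φ : Sym2 ℕ → Fin q, FreeColoring t R φ ∧ φ e = c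

/-- A safe `X`-determiner for the tuple `(K_{t 0}, …, K_{t (q-1)})` with signal edge `e`. -/
structure IsSafeDeterminer (t : Fin q → ℕ) (X : Set (Fin q)) (R : SimpleGraph ℕ) (e : Sym2 ℕ) :
    Prop where
  finite : R.edgeSet.Finite
  edge_mem : e ∈ R.edgeSet
  not_ramsey : ¬ IsRamsey t R
  color_mem : ∀ φ : Sym2 ℕ → Fin q, FreeColoring t R φ → φ e ∈ X
  safe : ∀ c ∈ X, ∃ φ : Sym2 ℕ → Fin q, FreeColoring t R φ ∧ φ e = c ∧
    ∀ G : SimpleGraph ℕ, G.edgeSet.Finite → ∀ (f : Sym2 ℕ) (ι : ℕ ↪ ℕ),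
      IsAttachment R e G f ι → ∀ ψ : Sym2 ℕ → Fin q, ExtendsOn R ι φ ψ →
        (FreeColoring t (G ⊔ R.map ι) ψ ↔ FreeColoring t G ψ)

/-- An `X`-sender for the tuple `(K_{t 0}, …, K_{t (q-1)})` with signal edges `e` and `f`;
it is positive if `pos = true` and negative if `pos = false`. -/
structure IsSender (t : Fin q → ℕ) (pos : Bool) (X : Set (Fin q)) (S : SimpleGraph ℕ)
    (e f : Sym2 ℕ) : Prop where
  finite : S.edgeSet.Finite
  edge_e : e ∈ S.edgeSet
  edge_f : f ∈ S.edgeSet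
  ne : e ≠ f
  not_ramsey : ¬ IsRamsey t S
  color_mem : ∀ φ : Sym2 ℕ → Fin q, FreeColoring t S φ →
    φ e ∈ X ∧ φ f ∈ X ∧ (if pos then φ e = φ f else φ e ≠ φ f)
  exists_color : ∀ c₁ c₂ : Fin q, c₁ ∈ X → c₂ ∈ X → (if pos then c₁ = c₂ else c₁ ≠ c₂) →
    ∃ φ : Sym2 ℕ → Fin q, FreeColoring t S φ ∧ φ e = c₁ ∧ φ f = c₂

/-- A safe `X`-sender for the tuple `(K_{t 0}, …, K_{t (q-1)})` with signal edges `e` and `f`;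
it is positive if `pos = true` and negative if `pos = false`. -/
structure IsSafeSender (t : Fin q → ℕ) (pos : Bool) (X : Set (Fin q)) (S : SimpleGraph ℕ)
    (e f : Sym2 ℕ) : Prop where
  finite : S.edgeSet.Finite
  edge_e : e ∈ S.edgeSet
  edge_f : f ∈ S.edgeSet
  ne : e ≠ f
  not_ramsey : ¬ IsRamsey t S
  color_mem : ∀ φ : Sym2 ℕ → Fin q, FreeColoring t S φ →
    φ e ∈ X ∧ φ f ∈ X ∧ (if pos then φ e = φ f else φ e ≠ φ f)
  safe : ∀ c₁ c₂ : Fin q, c₁ ∈ X → c₂ ∈ X → (if pos then c₁ = c₂ else c₁ ≠ c₂) →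
    ∃ φ : Sym2 ℕ → Fin q, FreeColoring t S φ ∧ φ e = c₁ ∧ φ f = c₂ ∧
      ∀ G : SimpleGraph ℕ, G.edgeSet.Finite → ∀ (a b : Sym2 ℕ) (ι : ℕ ↪ ℕ),
        IsJoining S e f G a b ι → ∀ ψ : Sym2 ℕ → Fin q, ExtendsOn S ι φ ψ →
          (FreeColoring t (G ⊔ S.map ι) ψ ↔ FreeColoring t G ψ)

/-- A tuple of cliques `(K_{t 0}, …, K_{t (q-1)})` is distinguishable if, for every clique
size `m` represented in the tuple, there is a safe `X_m`-determiner, and, when `|X_m| > 1`,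
safe positive and negative `X_m`-senders, where `X_m` is the set of colors `i` with `t i = m`. -/
def Distinguishable (t : Fin q → ℕ) : Prop :=
  ∀ m : ℕ, (∃ i, t i = m) →
    (∃ R e, IsSafeDeterminer t {i | t i = m} R e) ∧
    (1 < {i : Fin q | t i = m}.ncard →
      (∃ S e f, IsSafeSender t true {i | t i = m} S e f) ∧
      (∃ S e f, IsSafeSender t false {i | t i = m} S e f))

/-- The minimum degree of a graph on `ℕ`, taken over the vertices that are not isolated. -/
noncomputable def minDegree (G : SimpleGraph ℕ) : ℕ :=
  sInf {d | ∃ v ∈ G.support, (G.neighborSet v).ncard = d}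

/-- The smallest minimum degree of a `q`-Ramsey-minimal graph for
`(K_{t 0}, …, K_{t (q-1)})`. -/
noncomputable def sParam (t : Fin q → ℕ) : ℕ :=
  sInf {d | ∃ G : SimpleGraph ℕ, G.edgeSet.Finite ∧ RamseyMinimal t G ∧ minDegree G = d}

/-- A color pattern witnessing the packing parameter. -/
def IsPackingPattern (t : Fin q → ℕ) {n : ℕ} (G : Fin q → SimpleGraph (Fin n)) : Prop :=
  (∀ i j, i ≠ j → Disjoint (G i).edgeSet (G j).edgeSet) ∧
  (∀ i, (G i).CliqueFree (t i + 1)) ∧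
  (∀ lam : Fin n → Fin q, ∃ i, ∃ K : Finset (Fin n),
    (G i).IsNClique (t i) K ∧ ∀ v ∈ K, lam v = i)

/-- The packing parameter `P_q(t 0, …, t (q-1))`. -/
noncomputable def packing (t : Fin q → ℕ) : ℕ :=
  sInf {n | ∃ G : Fin q → SimpleGraph (Fin n), IsPackingPattern t G}

section Auxiliary

variable {q : ℕ}

/-- The grid graph on tuples: `u ~ v` iff they agree on all coordinates before `i`
and differ at coordinate `i`. -/
def grid (t : Fin q → ℕ) (i : Fin q) : SimpleGraph (∀ j, Fin (t j)) where
  Adj u v := (∀ j, j < i → u j = v j) ∧ u i ≠ v i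
  symm := by
    constructor
    intro u v h
    exact ⟨fun j hj => (h.1 j hj).symm, fun hh => h.2 hh.symm⟩
  loopless := by constructor; intro u h; exact h.2 rfl

lemma grid_adj_incomp (t : Fin q → ℕ) {i j : Fin q} (hij : i < j) (u v : ∀ k, Fin (t k)) :
    (grid t i).Adj u v → (grid t j).Adj u v → False := by
  rintro ⟨_, hne⟩ ⟨hpre, _⟩
  exact hne (hpre i hij)

lemma disjoint_edgeSet_of_adj {V : Type*} {A B : SimpleGraph V}
    (h : ∀ u v, A.Adj u v → B.Adj u v → False) : Disjoint A.edgeSet B.edgeSet := by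
  rw [Set.disjoint_left]
  intro ed
  induction ed using Sym2.ind with
  | _ u v =>
    intro hA hB
    exact h u v hA hB

lemma grid_cliqueFree (t : Fin q → ℕ) (i : Fin q) : (grid t i).CliqueFree (t i + 1) := by
  classical
  intro K hK
  have hinj : Set.InjOn (fun v => v i) (K : Set (∀ j, Fin (t j))) := by
    intro u hu v hv huv
    by_contra hne
    exact (hK.1 hu hv hne).2 huv
  have hcard : K.card ≤ t i := by
    calc K.card = (K.image (fun v => v i)).card := (Finset.card_image_of_injOn hinj).symm
    _ ≤ Fintype.card (Fin (t i)) := Finset.card_le_univ _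
    _ = t i := Fintype.card_fin _
  rw [hK.2] at hcard
  omega

lemma grid_coloring (t : Fin q → ℕ) (ht : ∀ i, 1 ≤ t i)
    (lam : (∀ j, Fin (t j)) → Fin q) :
    ∃ i K, (grid t i).IsNClique (t i) K ∧ ∀ v ∈ K, lam v = i := by
  classical
  by_contra hcon
  have main : ∀ m, m ≤ q → ∃ a : ∀ j, Fin (t j),
      ∀ b : ∀ j, Fin (t j), (∀ k : Fin q, (k : ℕ) < m → b k = a k) → m ≤ (lam b : ℕ) := by
    intro m
    induction m with
    | zero => exact fun _ => ⟨fun j => ⟨0, ht j⟩, fun b _ => Nat.zero_le _⟩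
    | succ m ih =>
      intro hm
      obtain ⟨a, ha⟩ := ih (by omega)
      set i : Fin q := ⟨m, by omega⟩ with hi
      by_cases hx : ∀ x : Fin (t i), ∃ b : ∀ j, Fin (t j),
          (∀ k : Fin q, (k : ℕ) < m → b k = a k) ∧ b i = x ∧ lam b = i
      · exfalso
        choose b hb1 hb2 hb3 using hx
        have hbinj : Function.Injective b := by
          intro x y h
          rw [← hb2 x, ← hb2 y, h]
        refine hcon ⟨i, Finset.univ.map ⟨b, hbinj⟩, ⟨?_, ?_⟩, ?_⟩
        · intro u hu v hv hne
          rw [Finset.mem_coe, Finset.mem_map] at hu hv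
          obtain ⟨x, -, rfl⟩ := hu
          obtain ⟨y, -, rfl⟩ := hv
          simp only [Function.Embedding.coeFn_mk] at hne ⊢
          have hxy : x ≠ y := by
            intro h; exact hne (by rw [h])
          constructor
          · intro j hj
            have hj' : (j : ℕ) < m := hj
            rw [hb1 x j hj', hb1 y j hj']
          · simpa [Function.Embedding.coeFn_mk, hb2 x, hb2 y] using hxy
        · rw [Finset.card_map, Finset.card_univ, Fintype.card_fin]
        · intro v hv
          rw [Finset.mem_map] at hv
          obtain ⟨x, -, rfl⟩ := hv
          exact hb3 x
      · push_neg at hx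
        obtain ⟨x, hx⟩ := hx
        refine ⟨Function.update a i x, fun b hb => ?_⟩
        have hpre : ∀ k : Fin q, (k : ℕ) < m → b k = a k := by
          intro k hk
          rw [hb k (by omega)]
          have hkm : (k : ℕ) ≠ m := by omega
          have hkne : k ≠ i := fun h => hkm (congrArg Fin.val h)
          exact Function.update_of_ne hkne x a
        have hbi : b i = x := by
          rw [hb i (Nat.lt_succ_self m)]
          exact Function.update_self i x a
        have h1 : m ≤ (lam b : ℕ) := ha b hpre
        have h2 : lam b ≠ i := hx b hpre hbi
        have h3 : (lam b : ℕ) ≠ m := fun h => h2 (Fin.ext h)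
        omega
  obtain ⟨a, ha⟩ := main q le_rfl
  have := ha a (fun k hk => rfl)
  have := (lam a).isLt
  omega

lemma exists_pattern (t : Fin q → ℕ) (ht : ∀ i, 1 ≤ t i) :
    ∃ G : Fin q → SimpleGraph (Fin (∏ i, t i)), IsPackingPattern t G := by
  classical
  have hcard : Fintype.card (∀ j, Fin (t j)) = ∏ i, t i := by simp
  let e : Fin (∏ i, t i) ≃ (∀ j, Fin (t j)) := (Fintype.equivFinOfCardEq hcard).symm
  refine ⟨fun i => (grid t i).comap e.toEmbedding, ?_, ?_, ?_⟩
  · intro i j hij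
    rcases lt_or_gt_of_ne hij with h | h
    · refine disjoint_edgeSet_of_adj (fun u v hA hB => ?_)
      exact grid_adj_incomp t h _ _ hA hB
    · refine disjoint_edgeSet_of_adj (fun u v hA hB => ?_)
      exact grid_adj_incomp t h _ _ hB hA
  · intro i
    exact (grid_cliqueFree t i).comap ⟨(SimpleGraph.Embedding.comap e.toEmbedding (grid t i)).toCopy⟩
  · intro lam
    obtain ⟨i, K, hK, hKcol⟩ := grid_coloring t ht (fun v => lam (e.symm v))
    refine ⟨i, K.map e.symm.toEmbedding, ⟨?_, ?_⟩, ?_⟩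
    · intro u hu v hv hne
      rw [Finset.mem_coe, Finset.mem_map] at hu hv
      obtain ⟨x, hx, rfl⟩ := hu
      obtain ⟨y, hy, rfl⟩ := hv
      have hxy : x ≠ y := by
        intro h; exact hne (by rw [h])
      have := hK.1 hx hy hxy
      simpa [SimpleGraph.comap_adj] using this
    · rw [Finset.card_map, hK.2]
    · intro v hv
      rw [Finset.mem_map] at hv
      obtain ⟨x, hx, rfl⟩ := hv
      exact hKcol x hx

lemma pattern_lb (q : ℕ) (hq : 1 < q) (t : Fin q → ℕ) (h3 : ∀ i, 3 ≤ t i)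
    {n : ℕ} (G : Fin q → SimpleGraph (Fin n)) (hG : IsPackingPattern t G) :
    t ⟨0, by omega⟩ * t ⟨1, by omega⟩ ≤ n := by
  classical
  obtain ⟨hdisj, hfree, hcol⟩ := hG
  set i0 : Fin q := ⟨0, by omega⟩ with hi0
  set i1 : Fin q := ⟨1, by omega⟩ with hi1
  have hne01 : i0 ≠ i1 := by
    intro h
    have := congrArg Fin.val h
    simp [hi0, hi1] at this
  have key : ∀ j, j ≤ t i1 → ∃ F : Finset (Finset (Fin n)), F.card = j
      ∧ (∀ C ∈ F, (G i0).IsNClique (t i0) C)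
      ∧ (∀ C ∈ F, ∀ D ∈ F, C ≠ D → Disjoint C D) := by
    intro j
    induction j with
    | zero => exact fun _ => ⟨∅, by simp, by simp, by simp⟩
    | succ j ih =>
      intro hj
      obtain ⟨F, hFc, hFcl, hFd⟩ := ih (by omega)
      set B : Finset (Fin n) := F.biUnion id with hB
      set lam : Fin n → Fin q := fun v => if v ∈ B then i1 else i0 with hlam
      obtain ⟨i, K, hK, hKcol⟩ := hcol lam
      have hKne : K.Nonempty := by
        rw [← Finset.card_pos, hK.2]
        have := h3 i; omega
      have hrange : ∀ v ∈ K, v ∈ B ∧ i = i1 ∨ v ∉ B ∧ i = i0 := by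
        intro v hv
        have := hKcol v hv
        by_cases hvB : v ∈ B
        · left; exact ⟨hvB, by rw [← this, hlam]; simp [hvB]⟩
        · right; exact ⟨hvB, by rw [← this, hlam]; simp [hvB]⟩
      obtain ⟨v0, hv0⟩ := hKne
      rcases hrange v0 hv0 with ⟨-, rfl⟩ | ⟨hv0B, rfl⟩
      · -- color i1: contradiction via counting
        exfalso
        have hKB : ∀ v ∈ K, v ∈ B := by
          intro v hv
          rcases hrange v hv with ⟨h, -⟩ | ⟨-, h⟩
          · exact h
          · exact absurd h hne01.symm
        have hcont : ∀ v ∈ K, ∃ C, C ∈ F ∧ v ∈ C := by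
          intro v hv
          simpa using Finset.mem_biUnion.1 (hKB v hv)
        set f : Fin n → Finset (Fin n) :=
          fun v => if h : v ∈ K then (hcont v h).choose else ∅ with hf
        have hf1 : ∀ v ∈ K, f v ∈ F ∧ v ∈ f v := by
          intro v hv
          rw [hf]
          simp only [hv, dif_pos]
          exact (hcont v hv).choose_spec
        have hKcard : K.card ≤ F.card := by
          refine Finset.card_le_card_of_injOn f (fun v hv => (hf1 v hv).1) ?_
          intro u hu v hv hfeq
          rw [Finset.mem_coe] at hu hv
          by_contra hneuv
          have hadj1 : (G i1).Adj u v := hK.1 hu hv hneuv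
          have hadj0 : (G i0).Adj u v := by
            refine (hFcl (f u) (hf1 u hu).1).1 ?_ ?_ hneuv
            · exact (hf1 u hu).2
            · rw [hfeq]; exact (hf1 v hv).2
          exact Set.disjoint_left.1 (hdisj i0 i1 hne01)
            ((G i0).mem_edgeSet.2 hadj0) ((G i1).mem_edgeSet.2 hadj1)
        rw [hK.2, hFc] at hKcard
        omega
      · -- color i0: extend the family
        have hKB : ∀ v ∈ K, v ∉ B := by
          intro v hv
          rcases hrange v hv with ⟨-, h⟩ | ⟨h, -⟩
          · exact absurd h hne01
          · exact h
        have hKF : K ∉ F := by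
          intro hKF
          exact hKB v0 hv0 (Finset.mem_biUnion.2 ⟨K, hKF, hv0⟩)
        refine ⟨insert K F, ?_, ?_, ?_⟩
        · rw [Finset.card_insert_of_notMem hKF, hFc]
        · intro C hC
          rcases Finset.mem_insert.1 hC with rfl | hC
          · exact hK
          · exact hFcl C hC
        · have hdisjK : ∀ D ∈ F, Disjoint K D := by
            intro D hD
            rw [Finset.disjoint_left]
            intro v hv hvD
            exact hKB v hv (Finset.mem_biUnion.2 ⟨D, hD, hvD⟩)
          intro C hC D hD hCD
          rcases Finset.mem_insert.1 hC with hCK | hC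
          · rcases Finset.mem_insert.1 hD with hDK | hD
            · exact absurd (hCK.trans hDK.symm) hCD
            · rw [hCK]; exact hdisjK D hD
          · rcases Finset.mem_insert.1 hD with hDK | hD
            · rw [hDK]; exact (hdisjK C hC).symm
            · exact hFd C hC D hD hCD
  obtain ⟨F, hFc, hFcl, hFd⟩ := key (t i1) le_rfl
  have hcard : (F.biUnion id).card = t i1 * t i0 := by
    calc (F.biUnion id).card = ∑ C ∈ F, C.card :=
          Finset.card_biUnion (fun C hC D hD h => hFd C hC D hD h)
    _ = ∑ _C ∈ F, t i0 := Finset.sum_congr rfl (fun C hC => (hFcl C hC).2)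
    _ = F.card * t i0 := by rw [Finset.sum_const, smul_eq_mul]
    _ = t i1 * t i0 := by rw [hFc]
  have hle : (F.biUnion id).card ≤ n := by
    calc (F.biUnion id).card ≤ Fintype.card (Fin n) := Finset.card_le_univ _
    _ = n := Fintype.card_fin _
  rw [hcard] at hle
  calc t i0 * t i1 = t i1 * t i0 := Nat.mul_comm _ _
  _ ≤ n := hle

end Auxiliary

/-- For `q ≥ 2` and `t_1 ≥ … ≥ t_q ≥ 3`, the packing parameter satisfies
`t_1 · t_2 ≤ P_q(t_1, …, t_q)`. -/

theorem packing_lower_bound (q : ℕ) (hq : 2 ≤ q) (t : Fin q → ℕ)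
    (hmono : Antitone t) (h3 : ∀ i, 3 ≤ t i) :
    t ⟨0, by omega⟩ * t ⟨1, by omega⟩ ≤ packing t := by
  have ht1 : ∀ i, 1 ≤ t i := fun i => le_trans (by norm_num) (h3 i)
  obtain ⟨G₀, hG₀⟩ := exists_pattern t ht1
  have hne : {n | ∃ G : Fin q → SimpleGraph (Fin n), IsPackingPattern t G}.Nonempty :=
    ⟨∏ i, t i, G₀, hG₀⟩
  have hmem := Nat.sInf_mem hne
  obtain ⟨G, hG⟩ := hmem
  exact pattern_lb q hq t h3 G hG


end RamseyGadgets
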